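/- Let k be a commutative ring with sfli k < ∞ and let G be a group. Then every Gorenstein flat kG-module is Gorenstein flat when restricted to a k-module, and every PGF kG-module is PGF when restricted to a k-module. -/

import Mathlib

open TensorProduct

universe u v w

section Tensor

variable (R : Type u) [Ring R]

/-- The subgroup of relations defining `I ⊗_R N` as a quotient of `I ⊗_ℤ N`,
where `I` is a right `R`-module and `N` is a left `R`-module. -/
noncomputable def rTensorRel (I : Type v) [AddCommGroup I] [Module Rᵐᵒᵖ I]
    (N : Type v) [AddCommGroup N] [Module R N] : AddSubgroup (I ⊗[ℤ] N) :=
  AddSubgroup.closure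
    {x | ∃ (r : R) (a : I) (n : N), x = (MulOpposite.op r • a) ⊗ₜ[ℤ] n - a ⊗ₜ[ℤ] (r • n)}

/-- The tensor product `I ⊗_R N` of a right `R`-module `I` and a left `R`-module `N`
over a (possibly noncommutative) ring `R`, as an abelian group. -/
noncomputable def RTensor (I : Type v) [AddCommGroup I] [Module Rᵐᵒᵖ I]
    (N : Type v) [AddCommGroup N] [Module R N] : Type v :=
  (I ⊗[ℤ] N) ⧸ rTensorRel R I N

noncomputable instance (I : Type v) [AddCommGroup I] [Module Rᵐᵒᵖ I]
    (N : Type v) [AddCommGroup N] [Module R N] : AddCommGroup (RTensor R I N) :=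
  inferInstanceAs (AddCommGroup ((I ⊗[ℤ] N) ⧸ rTensorRel R I N))

/-- Functoriality of `RTensor` in the second variable. -/
noncomputable def RTensor.map (I : Type v) [AddCommGroup I] [Module Rᵐᵒᵖ I]
    {N N' : Type v} [AddCommGroup N] [Module R N] [AddCommGroup N'] [Module R N']
    (f : N →ₗ[R] N') : RTensor R I N →+ RTensor R I N' :=
  QuotientAddGroup.map _ _
    (TensorProduct.map (LinearMap.id : I →ₗ[ℤ] I) f.toAddMonoidHom.toIntLinearMap).toAddMonoidHom
    (by
      refine (AddSubgroup.closure_le _).2 ?_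
      rintro x ⟨r, a, n, rfl⟩
      refine AddSubgroup.mem_comap.2 (AddSubgroup.subset_closure ⟨r, a, f n, ?_⟩)
      simp [map_sub, TensorProduct.map_tmul])

/-- Functoriality of `RTensor` in the first variable. -/
noncomputable def RTensor.mapLeft {I I' : Type v} [AddCommGroup I] [Module Rᵐᵒᵖ I]
    [AddCommGroup I'] [Module Rᵐᵒᵖ I'] (f : I →ₗ[Rᵐᵒᵖ] I')
    (N : Type v) [AddCommGroup N] [Module R N] : RTensor R I N →+ RTensor R I' N :=
  QuotientAddGroup.map _ _
    (TensorProduct.map f.toAddMonoidHom.toIntLinearMap (LinearMap.id : N →ₗ[ℤ] N)).toAddMonoidHom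
    (by
      refine (AddSubgroup.closure_le _).2 ?_
      rintro x ⟨r, a, n, rfl⟩
      refine AddSubgroup.mem_comap.2 (AddSubgroup.subset_closure ⟨r, f a, n, ?_⟩)
      simp [map_sub, TensorProduct.map_tmul])

/-- Flatness of a left module over a possibly noncommutative ring: tensoring with `M`
preserves injectivity of maps of right `R`-modules. -/
def ModFlat (M : Type v) [AddCommGroup M] [Module R M] : Prop :=
  ∀ (I I' : ModuleCat.{v} Rᵐᵒᵖ) (f : I →ₗ[Rᵐᵒᵖ] I'), Function.Injective f →
    Function.Injective (RTensor.mapLeft R f M)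

end Tensor
section Resolutions

variable (R : Type u) [Ring R]

/-- A complete flat resolution: an acyclic complex of flat left `R`-modules that remains
acyclic after applying `I ⊗_R -` for every injective right `R`-module `I`. -/
structure CompleteFlatResolution where
  F : ℤ → ModuleCat.{v} R
  d : ∀ n : ℤ, F (n + 1) →ₗ[R] F n
  flat : ∀ n, ModFlat R (F n)
  acyclic : ∀ n, Function.Exact (d (n + 1)) (d n)
  tensor_acyclic : ∀ (I : ModuleCat.{v} Rᵐᵒᵖ), Module.Injective Rᵐᵒᵖ I →
    ∀ n, Function.Exact (RTensor.map R I (d (n + 1))) (RTensor.map R I (d n))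

/-- A left `R`-module is Gorenstein flat if it is a syzygy of a complete flat resolution. -/
def IsGorensteinFlat (M : Type v) [AddCommGroup M] [Module R M] : Prop :=
  ∃ (C : CompleteFlatResolution.{u, v} R) (n : ℤ),
    Nonempty (M ≃ₗ[R] LinearMap.range (C.d n))

/-- A totally acyclic complex of projectives: an acyclic complex of projective left `R`-modules
`P` such that `Hom_R(P, Q)` is acyclic for every projective `R`-module `Q`. -/
structure CompleteProjectiveResolution where
  F : ℤ → ModuleCat.{v} R
  d : ∀ n : ℤ, F (n + 1) →ₗ[R] F n
  projective : ∀ n, Module.Projective R (F n)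
  acyclic : ∀ n, Function.Exact (d (n + 1)) (d n)
  hom_acyclic : ∀ (Q : ModuleCat.{v} R), Module.Projective R Q →
    ∀ n, Function.Exact (fun g : ↥(F n) →ₗ[R] ↥Q => g.comp (d n))
      (fun g : ↥(F (n + 1)) →ₗ[R] ↥Q => g.comp (d (n + 1)))

/-- A left `R`-module is Gorenstein projective if it is a syzygy of a totally acyclic
complex of projectives. -/
def IsGorensteinProjective (M : Type v) [AddCommGroup M] [Module R M] : Prop :=
  ∃ (C : CompleteProjectiveResolution.{u, v} R) (n : ℤ),
    Nonempty (M ≃ₗ[R] LinearMap.range (C.d n))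

/-- An acyclic complex of projective left `R`-modules that remains acyclic after applying
`I ⊗_R -` for every injective right `R`-module `I`. -/
structure PGFResolution where
  F : ℤ → ModuleCat.{v} R
  d : ∀ n : ℤ, F (n + 1) →ₗ[R] F n
  projective : ∀ n, Module.Projective R (F n)
  acyclic : ∀ n, Function.Exact (d (n + 1)) (d n)
  tensor_acyclic : ∀ (I : ModuleCat.{v} Rᵐᵒᵖ), Module.Injective Rᵐᵒᵖ I →
    ∀ n, Function.Exact (RTensor.map R I (d (n + 1))) (RTensor.map R I (d n))

/-- A left `R`-module is projectively coresolved Gorenstein flat (PGF) if it is a syzygy of an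
acyclic complex of projectives that stays acyclic under `I ⊗_R -` for every injective right
module `I`. -/
def IsPGF (M : Type v) [AddCommGroup M] [Module R M] : Prop :=
  ∃ (C : PGFResolution.{u, v} R) (n : ℤ),
    Nonempty (M ≃ₗ[R] LinearMap.range (C.d n))

/-- A complete injective resolution: an acyclic complex of injective left `R`-modules `I` such
that `Hom_R(J, I)` is acyclic for every injective `R`-module `J`. -/
structure CompleteInjectiveResolution where
  F : ℤ → ModuleCat.{v} R
  d : ∀ n : ℤ, F (n + 1) →ₗ[R] F n
  injective : ∀ n, Module.Injective R (F n)
  acyclic : ∀ n, Function.Exact (d (n + 1)) (d n)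
  hom_acyclic : ∀ (J : ModuleCat.{v} R), Module.Injective R J →
    ∀ n, Function.Exact (fun g : ↥J →ₗ[R] ↥(F (n + 1 + 1)) => (d (n + 1)).comp g)
      (fun g : ↥J →ₗ[R] ↥(F (n + 1)) => (d n).comp g)

/-- A left `R`-module is Gorenstein injective if it is a syzygy of a complete injective
resolution. -/
def IsGorensteinInjective (M : Type v) [AddCommGroup M] [Module R M] : Prop :=
  ∃ (C : CompleteInjectiveResolution.{u, v} R) (n : ℤ),
    Nonempty (M ≃ₗ[R] LinearMap.range (C.d n))

/-- `M` admits a resolution of length at most `n` by flat modules. -/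
def FlatDimLE (M : Type v) [AddCommGroup M] [Module R M] (n : ℕ) : Prop :=
  ∃ (F : ℕ → ModuleCat.{v} R) (d : ∀ i, F (i + 1) →ₗ[R] F i) (ε : F 0 →ₗ[R] M),
    (∀ i, ModFlat R (F i)) ∧ Function.Surjective ε ∧ Function.Exact (d 0) ε ∧
    (∀ i, Function.Exact (d (i + 1)) (d i)) ∧ ∀ i, n < i → ∀ x : F i, x = 0

/-- The flat dimension of a module, valued in `ℕ∞`. -/
noncomputable def FlatDim (M : Type v) [AddCommGroup M] [Module R M] : ℕ∞ :=
  sInf {d : ℕ∞ | ∃ n : ℕ, d = n ∧ FlatDimLE R M n}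

/-- `M` admits a resolution of length at most `n` by projective modules. -/
def ProjDimLE (M : Type v) [AddCommGroup M] [Module R M] (n : ℕ) : Prop :=
  ∃ (F : ℕ → ModuleCat.{v} R) (d : ∀ i, F (i + 1) →ₗ[R] F i) (ε : F 0 →ₗ[R] M),
    (∀ i, Module.Projective R (F i)) ∧ Function.Surjective ε ∧ Function.Exact (d 0) ε ∧
    (∀ i, Function.Exact (d (i + 1)) (d i)) ∧ ∀ i, n < i → ∀ x : F i, x = 0

/-- The projective dimension of a module, valued in `ℕ∞`. -/
noncomputable def ProjDim (M : Type v) [AddCommGroup M] [Module R M] : ℕ∞ :=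
  sInf {d : ℕ∞ | ∃ n : ℕ, d = n ∧ ProjDimLE R M n}

/-- `M` admits a resolution of length at most `n` by Gorenstein flat modules. -/
def GorensteinFlatDimLE (M : Type v) [AddCommGroup M] [Module R M] (n : ℕ) : Prop :=
  ∃ (F : ℕ → ModuleCat.{v} R) (d : ∀ i, F (i + 1) →ₗ[R] F i) (ε : F 0 →ₗ[R] M),
    (∀ i, IsGorensteinFlat R (F i)) ∧ Function.Surjective ε ∧ Function.Exact (d 0) ε ∧
    (∀ i, Function.Exact (d (i + 1)) (d i)) ∧ ∀ i, n < i → ∀ x : F i, x = 0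

/-- The Gorenstein flat dimension of a module, valued in `ℕ∞`. -/
noncomputable def GorensteinFlatDim (M : Type v) [AddCommGroup M] [Module R M] : ℕ∞ :=
  sInf {d : ℕ∞ | ∃ n : ℕ, d = n ∧ GorensteinFlatDimLE R M n}

/-- `M` admits a resolution of length at most `n` by Gorenstein projective modules. -/
def GorensteinProjDimLE (M : Type v) [AddCommGroup M] [Module R M] (n : ℕ) : Prop :=
  ∃ (F : ℕ → ModuleCat.{v} R) (d : ∀ i, F (i + 1) →ₗ[R] F i) (ε : F 0 →ₗ[R] M),
    (∀ i, IsGorensteinProjective R (F i)) ∧ Function.Surjective ε ∧ Function.Exact (d 0) ε ∧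
    (∀ i, Function.Exact (d (i + 1)) (d i)) ∧ ∀ i, n < i → ∀ x : F i, x = 0

/-- The Gorenstein projective dimension of a module, valued in `ℕ∞`. -/
noncomputable def GorensteinProjDim (M : Type v) [AddCommGroup M] [Module R M] : ℕ∞ :=
  sInf {d : ℕ∞ | ∃ n : ℕ, d = n ∧ GorensteinProjDimLE R M n}

/-- `sfli R`: the supremum of the flat dimensions of injective left `R`-modules. -/
noncomputable def sfli : ℕ∞ :=
  sSup {d : ℕ∞ | ∃ I : ModuleCat.{u} R, Module.Injective R I ∧ d = FlatDim R I}

/-- The Gorenstein weak global dimension of `R`: the supremum of the Gorenstein flat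
dimensions of all `R`-modules. -/
noncomputable def GwglDim : ℕ∞ :=
  sSup {d : ℕ∞ | ∃ M : ModuleCat.{u} R, d = GorensteinFlatDim R M}

/-- The global dimension of `R`: the supremum of the projective dimensions of all
`R`-modules. -/
noncomputable def globalDim : ℕ∞ :=
  sSup {d : ℕ∞ | ∃ M : ModuleCat.{u} R, d = ProjDim R M}

end Resolutions
section CharacterDual

variable (R : Type u) [Ring R]

/-- The right `R`-module structure on the character module `Hom_ℤ(M, ℚ/ℤ)` of a left
`R`-module `M`, given by `(op r • f) m = f (r • m)`. -/
noncomputable instance CharacterModule.moduleOp (M : Type v) [AddCommGroup M] [Module R M] :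
    Module Rᵐᵒᵖ (CharacterModule M) where
  smul r f := AddMonoidHom.comp f (DistribMulAction.toAddMonoidHom M r.unop)
  one_smul f := by
    ext m
    show f ((1 : Rᵐᵒᵖ).unop • m) = f m
    rw [MulOpposite.unop_one, one_smul]
  mul_smul r s f := by
    ext m
    show f ((r * s).unop • m) = f (s.unop • r.unop • m)
    rw [MulOpposite.unop_mul, mul_smul]
  smul_zero r := by ext m; rfl
  smul_add r f g := by ext m; rfl
  add_smul r s f := by
    ext m
    show f ((r + s).unop • m) = f (r.unop • m) + f (s.unop • m)
    rw [MulOpposite.unop_add, add_smul, map_add]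
  zero_smul f := by
    ext m
    show f ((0 : Rᵐᵒᵖ).unop • m) = 0
    rw [MulOpposite.unop_zero, zero_smul, map_zero]

end CharacterDual

section GroupAlgebra

/-- The trivial `kG`-module `k`. -/
def TrivialModule (k : Type u) [CommRing k] (G : Type v) [Group G] : Type u := k

variable (k : Type u) [CommRing k] (G : Type v) [Group G]

noncomputable instance : AddCommGroup (TrivialModule k G) := inferInstanceAs (AddCommGroup k)
noncomputable instance : Module k (TrivialModule k G) := inferInstanceAs (Module k k)

/-- The augmentation map `kG → k`, sending every group element to `1`. -/
noncomputable def augmentation : MonoidAlgebra k G →ₐ[k] k := MonoidAlgebra.lift k k G 1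

noncomputable instance : Module (MonoidAlgebra k G) (TrivialModule k G) :=
  Module.compHom k (augmentation k G).toRingHom

noncomputable instance : IsScalarTower k (MonoidAlgebra k G) (TrivialModule k G) := by
  constructor
  intro c r x
  show (augmentation k G (c • r)) • x = c • ((augmentation k G r) • x)
  rw [map_smul]
  exact mul_smul c ((augmentation k G) r) x

/-- The Gorenstein homological dimension of a group `G` over a commutative ring `k`:
the Gorenstein flat dimension of the trivial `kG`-module `k`. -/
noncomputable def Ghd : ℕ∞ := GorensteinFlatDim (MonoidAlgebra k G) (TrivialModule k G)

/-- The Gorenstein cohomological dimension of a group `G` over a commutative ring `k`: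
the Gorenstein projective dimension of the trivial `kG`-module `k`. -/
noncomputable def Gcd : ℕ∞ := GorensteinProjDim (MonoidAlgebra k G) (TrivialModule k G)

/-- The group-inversion antipode `kG → (kG)ᵒᵖ` of the group algebra, induced by `g ↦ g⁻¹`. -/
noncomputable def MonoidAlgebra.antipode : MonoidAlgebra k G →+* (MonoidAlgebra k G)ᵐᵒᵖ :=
  ((MonoidAlgebra.lift k (MonoidAlgebra k G)ᵐᵒᵖ G)
    { toFun := fun g => MulOpposite.op (MonoidAlgebra.of k G g⁻¹)
      map_one' := by simp [MonoidAlgebra.one_def]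
      map_mul' := fun g h => by
        show MulOpposite.op (MonoidAlgebra.of k G (g * h)⁻¹) =
          MulOpposite.op (MonoidAlgebra.of k G g⁻¹) * MulOpposite.op (MonoidAlgebra.of k G h⁻¹)
        rw [mul_inv_rev, map_mul, MulOpposite.op_mul] }).toRingHom

/-- The left `kG`-module structure on the Pontryagin dual of a `kG`-module, obtained from the
right module structure via the antipode `g ↦ g⁻¹`. -/
noncomputable instance (M : Type w) [AddCommGroup M] [Module (MonoidAlgebra k G) M] :
    Module (MonoidAlgebra k G) (CharacterModule M) :=
  Module.compHom _ (MonoidAlgebra.antipode k G)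

end GroupAlgebra

section GModules

variable (k G : Type u) [CommRing k] [Group G]

/-- A `kG`-module together with a compatible `k`-module structure. -/
structure GModule : Type (u + 1) where
  carrier : Type u
  [addCommGroup : AddCommGroup carrier]
  [moduleKG : Module (MonoidAlgebra k G) carrier]
  [moduleK : Module k carrier]
  [tower : IsScalarTower k (MonoidAlgebra k G) carrier]

attribute [instance] GModule.addCommGroup GModule.moduleKG GModule.moduleK GModule.tower

instance : CoeSort (GModule k G) (Type u) := ⟨GModule.carrier⟩

/-- A weak characteristic module for `G` over `k`: a `kG`-module `A` that is flat over `k`,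
has finite flat dimension over `kG`, and admits a `k`-pure `kG`-monomorphism `k → A` from the
trivial module. -/
def HasWeakCharacteristicModule : Prop :=
  ∃ (A : GModule k G) (ι : TrivialModule k G →ₗ[MonoidAlgebra k G] A.carrier),
    ModFlat k A.carrier ∧ FlatDim (MonoidAlgebra k G) A.carrier < ⊤ ∧
    Function.Injective ι ∧
    ∀ (N : Type u) [AddCommGroup N] [Module k N],
      Function.Injective (LinearMap.rTensor N (ι.restrictScalars k))

end GModules
section TorExt

variable (R : Type u) [Ring R]

/-- `Tor_i^R(I, M) ≠ 0`, for a right `R`-module `I` and a left `R`-module `M`: for `i = 0` this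
says `I ⊗_R M ≠ 0`; for `i = j + 1` it says that for every projective resolution `P` of `M`,
the complex `I ⊗_R P` fails to be exact at degree `i`. -/
def TorNonzero (I : Type v) [AddCommGroup I] [Module Rᵐᵒᵖ I]
    (M : Type v) [AddCommGroup M] [Module R M] : ℕ → Prop
  | 0 => ∃ x : RTensor R I M, x ≠ 0
  | (j + 1) =>
    ∀ (P : ℕ → ModuleCat.{v} R) (d : ∀ i, P (i + 1) →ₗ[R] P i) (ε : P 0 →ₗ[R] M),
      (∀ i, Module.Projective R (P i)) → Function.Surjective ε → Function.Exact (d 0) ε →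
      (∀ i, Function.Exact (d (i + 1)) (d i)) →
      ¬ Function.Exact (RTensor.map R I (d (j + 1))) (RTensor.map R I (d j))

/-- `Ext^i_R(M, N) ≠ 0`: for `i = 0` this says `Hom_R(M, N) ≠ 0`; for `i = j + 1` it says that
for every projective resolution `P` of `M`, the complex `Hom_R(P, N)` fails to be exact at
degree `i`. -/
def ExtNonzero (M N : Type v) [AddCommGroup M] [Module R M]
    [AddCommGroup N] [Module R N] : ℕ → Prop
  | 0 => ∃ f : M →ₗ[R] N, f ≠ 0
  | (j + 1) =>
    ∀ (P : ℕ → ModuleCat.{v} R) (d : ∀ i, P (i + 1) →ₗ[R] P i) (ε : P 0 →ₗ[R] M),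
      (∀ i, Module.Projective R (P i)) → Function.Surjective ε → Function.Exact (d 0) ε →
      (∀ i, Function.Exact (d (i + 1)) (d i)) →
      ¬ Function.Exact (fun g : ↥(P j) →ₗ[R] N => g.comp (d j))
          (fun g : ↥(P (j + 1)) →ₗ[R] N => g.comp (d (j + 1)))

end TorExt

section GeneralizedDims

variable (k G : Type u) [CommRing k] [Group G]

/-- The generalized homological dimension of a group `G` over `k`:
`sup {i : Tor_i^{kG}(I, M) ≠ 0, M k-flat, I an injective right kG-module}`. -/
noncomputable def genHd : ℕ∞ :=
  sSup {d : ℕ∞ | ∃ i : ℕ, d = (i : ℕ∞) ∧ ∃ M : GModule k G, ModFlat k M.carrier ∧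
    ∃ I : ModuleCat.{u} (MonoidAlgebra k G)ᵐᵒᵖ, Module.Injective (MonoidAlgebra k G)ᵐᵒᵖ I ∧
      TorNonzero (MonoidAlgebra k G) I M.carrier i}

/-- The variant `hd'` of the generalized homological dimension of a group `G` over `k`:
`sup {i : Tor_i^{kG}(I, M) ≠ 0, M k-projective, I an injective right kG-module}`. -/
noncomputable def genHd' : ℕ∞ :=
  sSup {d : ℕ∞ | ∃ i : ℕ, d = (i : ℕ∞) ∧ ∃ M : GModule k G, Module.Projective k M.carrier ∧
    ∃ I : ModuleCat.{u} (MonoidAlgebra k G)ᵐᵒᵖ, Module.Injective (MonoidAlgebra k G)ᵐᵒᵖ I ∧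
      TorNonzero (MonoidAlgebra k G) I M.carrier i}

/-- The generalized cohomological dimension of a group `G` over `k`:
`sup {i : Ext^i_{kG}(M, P) ≠ 0, M k-projective, P a projective kG-module}`. -/
noncomputable def genCd : ℕ∞ :=
  sSup {d : ℕ∞ | ∃ i : ℕ, d = (i : ℕ∞) ∧ ∃ M : GModule k G, Module.Projective k M.carrier ∧
    ∃ P : ModuleCat.{u} (MonoidAlgebra k G), Module.Projective (MonoidAlgebra k G) P ∧
      ExtNonzero (MonoidAlgebra k G) M.carrier P i}

end GeneralizedDims

section Induction

open MonoidAlgebra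

variable (k : Type u) [CommRing k] {G : Type u} [Group G] (H : Subgroup G)
variable (M : Type u) [AddCommGroup M] [Module (MonoidAlgebra k ↥H) M]

/-- The relations defining `kG ⊗_{kH} M` as a quotient of `kG ⊗_ℤ M`. -/
noncomputable def indRel : Submodule (MonoidAlgebra k G) (MonoidAlgebra k G ⊗[ℤ] M) :=
  Submodule.span (MonoidAlgebra k G)
    {x | ∃ (a : MonoidAlgebra k G) (s : MonoidAlgebra k ↥H) (m : M),
      x = (a * MonoidAlgebra.mapDomainRingHom k H.subtype s) ⊗ₜ[ℤ] m - a ⊗ₜ[ℤ] (s • m)}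

/-- The induced module `Ind_H^G M = kG ⊗_{kH} M`, a `kG`-module. -/
noncomputable def IndMod : Type u :=
  (MonoidAlgebra k G ⊗[ℤ] M) ⧸ indRel k H M

noncomputable instance : AddCommGroup (IndMod k H M) :=
  inferInstanceAs (AddCommGroup ((MonoidAlgebra k G ⊗[ℤ] M) ⧸ indRel k H M))

noncomputable instance : Module (MonoidAlgebra k G) (IndMod k H M) :=
  inferInstanceAs (Module (MonoidAlgebra k G) ((MonoidAlgebra k G ⊗[ℤ] M) ⧸ indRel k H M))

end Induction

/-!
Restriction of scalars along `k → kG` preserves flatness and projectivity, because `kG` is free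
over `k` (for flatness via `(kG ⊗_k N) ⊗_{kG} X ≅ N ⊗_k X`), and it preserves acyclicity. It
remains to see that the restricted complex `F` stays acyclic after tensoring with an injective
`k`-module `I`. Since `sfli k < ∞`, `I` has finite flat dimension, and tensoring an acyclic
complex of flat modules with a module of finite flat dimension keeps it acyclic: a flat
presentation `0 → K → P → I → 0` stays exact after tensoring with each `F n`, which makes
`I ⊗ F` the quotient of the acyclic complex `P ⊗ F` by `K ⊗ F`, acyclic by induction.
-/

open MulOpposite

theorem TensorProduct.addMonoidHom_ext {R M N P : Type*} [CommSemiring R] [AddCommMonoid M]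
    [AddCommMonoid N] [AddCommMonoid P] [Module R M] [Module R N] {f g : M ⊗[R] N →+ P}
    (h : ∀ m n, f (m ⊗ₜ n) = g (m ⊗ₜ n)) : f = g :=
  AddMonoidHom.ext fun z => z.induction_on (by simp only [map_zero]) h
    fun _ _ hx hy => by simp only [map_add, hx, hy]

namespace RTensor

section Ring

variable {R : Type u} [Ring R] {W X : Type v} [AddCommGroup W] [Module Rᵐᵒᵖ W]
  [AddCommGroup X] [Module R X] {T : Type w} [AddCommGroup T]

variable (R W X) in
noncomputable def mk : W →+ X →+ RTensor R W X :=
  (LinearMap.toAddMonoidHom'.comp (TensorProduct.mk ℤ W X).toAddMonoidHom).compr₂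
    (QuotientAddGroup.mk' (rTensorRel R W X))

theorem mk_op_smul (r : R) (w : W) (x : X) : mk R W X (op r • w) x = mk R W X w (r • x) :=
  QuotientAddGroup.eq_iff_sub_mem.2 (AddSubgroup.subset_closure ⟨r, w, x, rfl⟩)

noncomputable def lift (φ : W →+ X →+ T) (hφ : ∀ (r : R) w x, φ (op r • w) x = φ w (r • x)) :
    RTensor R W X →+ T :=
  QuotientAddGroup.lift _ (TensorProduct.liftAddHom φ fun n w x => by simp [map_zsmul])
    ((AddSubgroup.closure_le _).2 <| by
      rintro _ ⟨r, w, x, rfl⟩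
      simp [hφ])

theorem lift_mk (φ : W →+ X →+ T) (hφ : ∀ (r : R) w x, φ (op r • w) x = φ w (r • x))
    (w : W) (x : X) : lift φ hφ (mk R W X w x) = φ w x := rfl

theorem addMonoidHom_ext {f g : RTensor R W X →+ T}
    (h : ∀ w x, f (mk R W X w x) = g (mk R W X w x)) : f = g :=
  QuotientAddGroup.addMonoidHom_ext _ (AddMonoidHom.toIntLinearMap_injective (TensorProduct.ext' h))

end Ring

section Commutative

variable {k : Type u} [CommRing k] {I : Type v} [AddCommGroup I] [Module kᵐᵒᵖ I] [Module k I]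
  [IsCentralScalar k I] {N : Type v} [AddCommGroup N] [Module k N]

variable (I N) in
noncomputable def equivTensorProduct : RTensor k I N ≃+ I ⊗[k] N :=
  AddMonoidHom.toAddEquiv
    (lift (LinearMap.toAddMonoidHom'.comp (TensorProduct.mk k I N).toAddMonoidHom)
      fun r w x => by simp)
    (TensorProduct.liftAddHom (mk k I N) fun r w x => by rw [← op_smul_eq_smul, mk_op_smul])
    (addMonoidHom_ext fun _ _ => rfl) (TensorProduct.addMonoidHom_ext fun _ _ => rfl)

theorem equivTensorProduct_comp_map {N' : Type v} [AddCommGroup N'] [Module k N']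
    (f : N →ₗ[k] N') :
    (f.lTensor I).toAddMonoidHom.comp (equivTensorProduct I N).toAddMonoidHom =
      (equivTensorProduct I N').toAddMonoidHom.comp (RTensor.map k I f) :=
  addMonoidHom_ext fun _ _ => rfl

theorem equivTensorProduct_comp_mapLeft {I' : Type v} [AddCommGroup I'] [Module kᵐᵒᵖ I']
    [Module k I'] [IsCentralScalar k I'] (f : I →ₗ[kᵐᵒᵖ] I') (g : I →ₗ[k] I')
    (hfg : ∀ a, g a = f a) :
    (g.rTensor N).toAddMonoidHom.comp (equivTensorProduct I N).toAddMonoidHom =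
      (equivTensorProduct I' N).toAddMonoidHom.comp (RTensor.mapLeft k f N) :=
  addMonoidHom_ext fun w x => congrArg (· ⊗ₜ[k] x) (hfg w)

theorem exact_map_iff {N' N'' : Type v} [AddCommGroup N'] [Module k N'] [AddCommGroup N'']
    [Module k N''] (f : N →ₗ[k] N') (g : N' →ₗ[k] N'') :
    Function.Exact (RTensor.map k I f) (RTensor.map k I g) ↔
      Function.Exact (f.lTensor I) (g.lTensor I) :=
  (Function.Exact.iff_of_ladder_addEquiv (equivTensorProduct I N) (equivTensorProduct I N')
    (equivTensorProduct I N'') (g₁₂ := (f.lTensor I).toAddMonoidHom)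
    (g₂₃ := (g.lTensor I).toAddMonoidHom)
    (equivTensorProduct_comp_map f) (equivTensorProduct_comp_map g)).symm

end Commutative

section BaseChange

variable {k : Type u} [CommRing k] (A : Type u) [Ring A] [Algebra k A]
  (X : Type u) [AddCommGroup X] [Module A X] [Module k X] [IsScalarTower k A X]
  (I : Type u) [AddCommGroup I] [Module k I]

noncomputable def baseChangePairing : A ⊗[k] I →ₗ[k] X →ₗ[k] I ⊗[k] X :=
  TensorProduct.lift <| ((LinearMap.llcomp k X X (I ⊗[k] X)) ∘ₗ TensorProduct.mk k I X).flip ∘ₗ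
    (Algebra.lsmul k k X).toLinearMap

variable {A X I} in
theorem baseChangePairing_tmul (a : A) (i : I) (x : X) :
    baseChangePairing A X I (a ⊗ₜ[k] i) x = i ⊗ₜ (a • x) := rfl

noncomputable def baseChangeEquiv : RTensor A (A ⊗[k] I) X ≃+ I ⊗[k] X :=
  AddMonoidHom.toAddEquiv
    (lift (LinearMap.toAddMonoidHom'.comp (baseChangePairing A X I).toAddMonoidHom) fun r z x => by
      induction z using TensorProduct.induction_on with
      | zero => simp
      | tmul a i => simp [TensorProduct.smul_tmul', baseChangePairing_tmul, mul_smul]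
      | add z z' hz hz' => simp_all)
    (TensorProduct.liftAddHom ((mk A (A ⊗[k] I) X).comp (TensorProduct.mk k A I 1).toAddMonoidHom)
      fun c i x => by
        have : (1 : A) ⊗ₜ[k] (c • i) = op (algebraMap k A c) • (1 ⊗ₜ i) := by
          rw [TensorProduct.smul_tmul', op_smul_eq_mul, one_mul, Algebra.algebraMap_eq_smul_one,
            TensorProduct.smul_tmul]
        change mk A (A ⊗[k] I) X (1 ⊗ₜ (c • i)) x = mk A (A ⊗[k] I) X (1 ⊗ₜ i) (c • x)
        rw [this, mk_op_smul, algebraMap_smul])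
    (addMonoidHom_ext fun z x => by
      induction z using TensorProduct.induction_on with
      | zero => simp
      | tmul a i =>
        change mk A (A ⊗[k] I) X (1 ⊗ₜ i) (a • x) = mk A (A ⊗[k] I) X (a ⊗ₜ i) x
        rw [← mk_op_smul, TensorProduct.smul_tmul', op_smul_eq_mul, one_mul]
      | add z z' hz hz' => simp_all)
    (TensorProduct.addMonoidHom_ext fun i x => by simp [lift_mk, baseChangePairing_tmul])

variable {A X I} in
theorem baseChangeEquiv_comp_mapLeft {I' : Type u} [AddCommGroup I'] [Module k I']
    (f : I →ₗ[k] I') :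
    (f.rTensor X).toAddMonoidHom.comp (baseChangeEquiv A X I).toAddMonoidHom =
      (baseChangeEquiv A X I').toAddMonoidHom.comp
        (RTensor.mapLeft A (TensorProduct.AlgebraTensorModule.lTensor Aᵐᵒᵖ A f) X) :=
  addMonoidHom_ext fun z x => by
    induction z using TensorProduct.induction_on with
    | zero => simp
    | tmul a i => rfl
    | add z z' hz hz' => simp_all

end BaseChange

end RTensor

section OppositeModules

variable (k : Type u) [CommRing k] (X : Type v) [AddCommGroup X]

abbrev Module.ofOpposite [Module kᵐᵒᵖ X] : Module k X :=
  Module.compHom X (RingEquiv.toOpposite k).toRingHom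

abbrev Module.toOpposite [Module k X] : Module kᵐᵒᵖ X :=
  Module.compHom X (RingEquiv.toOpposite k).symm.toRingHom

theorem isCentralScalar_ofOpposite [Module kᵐᵒᵖ X] :
    let := Module.ofOpposite k X
    IsCentralScalar k X :=
  let := Module.ofOpposite k X
  ⟨fun _ _ => rfl⟩

theorem isCentralScalar_toOpposite [Module k X] :
    let := Module.toOpposite k X
    IsCentralScalar k X :=
  let := Module.toOpposite k X
  ⟨fun _ _ => rfl⟩

variable {k X}

theorem modFlat_iff_flat [Small.{v} k] [Module k X] : ModFlat k X ↔ Module.Flat k X := by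
  constructor
  · intro hX
    rw [Module.Flat.iff_rTensor_preserves_injective_linearMap']
    intro N N' _ _ _ _ g hg
    let := Module.toOpposite k N
    let := Module.toOpposite k N'
    have := isCentralScalar_toOpposite k N
    have := isCentralScalar_toOpposite k N'
    let f : N →ₗ[kᵐᵒᵖ] N' := { g with map_smul' := fun r => g.map_smul r.unop }
    have hcomm : ⇑(g.rTensor X) ∘ RTensor.equivTensorProduct N X =
        RTensor.equivTensorProduct N' X ∘ RTensor.mapLeft k f X :=
      congrArg DFunLike.coe (RTensor.equivTensorProduct_comp_mapLeft f g fun _ => rfl)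
    refine (EquivLike.injective_comp (RTensor.equivTensorProduct N X) _).1 ?_
    rw [hcomm]
    exact (RTensor.equivTensorProduct N' X).injective.comp (hX (.of _ N) (.of _ N') f hg)
  · intro hX I I' f hf
    let := Module.ofOpposite k I
    let := Module.ofOpposite k I'
    have := isCentralScalar_ofOpposite k I
    have := isCentralScalar_ofOpposite k I'
    let g : I →ₗ[k] I' := { f with map_smul' := fun r => f.map_smul (op r) }
    have hcomm : ⇑(g.rTensor X) ∘ RTensor.equivTensorProduct I X =
        RTensor.equivTensorProduct I' X ∘ RTensor.mapLeft k f X :=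
      congrArg DFunLike.coe (RTensor.equivTensorProduct_comp_mapLeft f g fun _ => rfl)
    refine Function.Injective.of_comp (f := RTensor.equivTensorProduct I' X) ?_
    rw [← hcomm]
    exact (Module.Flat.rTensor_preserves_injective_linearMap g hf).comp
      (RTensor.equivTensorProduct I X).injective

theorem Module.Injective.of_opposite [Small.{v} k] [Module kᵐᵒᵖ X] [Module k X]
    [IsCentralScalar k X] (h : Module.Injective kᵐᵒᵖ X) : Module.Injective k X := by
  have := small_map (MulOpposite.opEquiv (α := k)).symm
  have := RingHomInvPair.of_ringEquiv (RingEquiv.toOpposite k).symm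
  have := RingHomInvPair.of_ringEquiv_symm (RingEquiv.toOpposite k).symm
  exact Module.Injective.of_ringEquiv (RingEquiv.toOpposite k).symm
    { AddEquiv.refl X with map_smul' := fun r x => op_smul_eq_smul r.unop x }

end OppositeModules

def IsAcyclic {R : Type*} [Ring R] {F : ℤ → Type*} [∀ n, AddCommGroup (F n)]
    [∀ n, Module R (F n)] (d : ∀ n, F (n + 1) →ₗ[R] F n) : Prop :=
  ∀ n, Function.Exact (d (n + 1)) (d n)

theorem IsAcyclic.of_shortExact {R : Type*} [Ring R] {A B C : ℤ → Type*}
    [∀ n, AddCommGroup (A n)] [∀ n, Module R (A n)] [∀ n, AddCommGroup (B n)]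
    [∀ n, Module R (B n)] [∀ n, AddCommGroup (C n)] [∀ n, Module R (C n)]
    {dA : ∀ n, A (n + 1) →ₗ[R] A n} {dB : ∀ n, B (n + 1) →ₗ[R] B n}
    {dC : ∀ n, C (n + 1) →ₗ[R] C n} {ι : ∀ n, A n →ₗ[R] B n} {π : ∀ n, B n →ₗ[R] C n}
    (hι : ∀ n, Function.Injective (ι n)) (hπ : ∀ n, Function.Surjective (π n))
    (hιπ : ∀ n, Function.Exact (ι n) (π n))
    (hιd : ∀ n, ι n ∘ₗ dA n = dB n ∘ₗ ι (n + 1)) (hπd : ∀ n, π n ∘ₗ dB n = dC n ∘ₗ π (n + 1))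
    (hA : IsAcyclic dA) (hB : IsAcyclic dB) : IsAcyclic dC := by
  have hιd' n a : ι n (dA n a) = dB n (ι (n + 1) a) := LinearMap.congr_fun (hιd n) a
  have hπd' n b : π n (dB n b) = dC n (π (n + 1) b) := LinearMap.congr_fun (hπd n) b
  intro n
  -- writing `n = m + 1` keeps every degree below `n` free of `n - 1 + 1` casts
  obtain ⟨n, rfl⟩ : ∃ m, n = m + 1 := ⟨n - 1, by omega⟩
  intro c
  refine ⟨fun hc => ?_, ?_⟩
  · obtain ⟨b, rfl⟩ := hπ _ c
    obtain ⟨a, ha⟩ := (hιπ _ (dB _ b)).1 (by rw [hπd', hc])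
    obtain ⟨a', rfl⟩ := (hA n a).1 <| hι n <| by
      rw [map_zero, hιd', ha, (hB n).apply_apply_eq_zero]
    obtain ⟨b', hb'⟩ := (hB (n + 1) (b - ι _ a')).1 (by rw [map_sub, ← hιd', ha, sub_self])
    refine ⟨π _ b', ?_⟩
    rw [← hπd', hb', map_sub, (hιπ _).apply_apply_eq_zero, sub_zero]
  · rintro ⟨c', rfl⟩
    obtain ⟨b', rfl⟩ := hπ _ c'
    rw [← hπd', ← hπd', (hB _).apply_apply_eq_zero, map_zero]

section FlatDim

variable {R : Type u} [Ring R] {M : Type v} [AddCommGroup M] [Module R M]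

theorem FlatDimLE.exists_linearEquiv (h : FlatDimLE R M 0) :
    ∃ P : ModuleCat.{v} R, ModFlat R P ∧ Nonempty (P ≃ₗ[R] M) := by
  obtain ⟨P, d, ε, hP, hε, hdε, -, hzero⟩ := h
  refine ⟨P 0, hP 0, ⟨.ofBijective ε ⟨?_, hε⟩⟩⟩
  rw [← LinearMap.ker_eq_bot, hdε.linearMap_ker_eq, LinearMap.range_eq_bot]
  exact LinearMap.ext fun x => hzero 1 one_pos x ▸ map_zero _

theorem FlatDimLE.exists_surjective {n : ℕ} (h : FlatDimLE R M (n + 1)) :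
    ∃ (P : ModuleCat.{v} R) (ε : P →ₗ[R] M), ModFlat R P ∧ Function.Surjective ε ∧
      FlatDimLE R (LinearMap.ker ε) n := by
  obtain ⟨P, d, ε, hP, hε, hdε, hd, hzero⟩ := h
  refine ⟨P 0, ε, hP 0, hε, fun i => P (i + 1), fun i => d (i + 1),
    (d 0).codRestrict _ fun x => hdε.apply_apply_eq_zero x, fun i => hP (i + 1), ?_, ?_,
    fun i => hd (i + 1), fun i hi => hzero (i + 1) (by omega)⟩
  · rintro ⟨y, hy⟩
    obtain ⟨x, rfl⟩ := (hdε y).1 hy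
    exact ⟨x, rfl⟩
  · exact fun x => Subtype.ext_iff.trans (hd 0 x)

theorem exists_flatDimLE_of_flatDim_lt_top (h : FlatDim R M < ⊤) : ∃ n, FlatDimLE R M n := by
  obtain ⟨_, ⟨n, rfl, hn⟩, -⟩ := sInf_lt_iff.1 h
  exact ⟨n, hn⟩

theorem Module.Injective.flatDim_le_sfli {I : Type u} [AddCommGroup I] [Module R I]
    (h : Module.Injective R I) : FlatDim R I ≤ sfli R :=
  le_sSup ⟨.of R I, h, rfl⟩

end FlatDim

section FiniteFlatDimension

variable {k : Type u} [CommRing k]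

theorem IsAcyclic.lTensor_of_flatDimLE [Small.{v} k] {F : ℤ → Type v}
    [∀ n, AddCommGroup (F n)] [∀ n, Module k (F n)] {d : ∀ n, F (n + 1) →ₗ[k] F n}
    (hF : ∀ n, Module.Flat k (F n)) (hd : IsAcyclic d) (n : ℕ) {I : Type v} [AddCommGroup I]
    [Module k I] (hI : FlatDimLE k I n) :
    IsAcyclic (F := fun m => I ⊗[k] F m) fun m => (d m).lTensor I := by
  induction n generalizing I with
  | zero =>
    obtain ⟨P, hP, ⟨e⟩⟩ := hI.exists_linearEquiv
    have := modFlat_iff_flat.1 hP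
    have := Module.Flat.of_linearEquiv e.symm
    exact fun m => Module.Flat.lTensor_exact I (hd m)
  | succ n ih =>
    obtain ⟨P, ε, hP, hε, hK⟩ := hI.exists_surjective
    have := modFlat_iff_flat.1 hP
    refine IsAcyclic.of_shortExact (A := fun m => LinearMap.ker ε ⊗[k] F m)
      (ι := fun m => (LinearMap.ker ε).subtype.rTensor (F m)) (π := fun m => ε.rTensor (F m))
      (fun m => ?_) (fun m => LinearMap.rTensor_surjective (F m) hε)
      (fun m => rTensor_exact (F m) (LinearMap.exact_subtype_ker_map ε) hε)
      (fun m => by rw [LinearMap.rTensor_comp_lTensor, LinearMap.lTensor_comp_rTensor])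
      (fun m => by rw [LinearMap.rTensor_comp_lTensor, LinearMap.lTensor_comp_rTensor])
      (ih hK) (fun m => Module.Flat.lTensor_exact P (hd m))
    have := hF m
    exact Module.Flat.rTensor_preserves_injective_linearMap _ Subtype.val_injective

theorem IsAcyclic.exact_rTensorMap_of_sfli_lt_top (hk : sfli k < ⊤) {F : ℤ → Type u}
    [∀ n, AddCommGroup (F n)] [∀ n, Module k (F n)] {d : ∀ n, F (n + 1) →ₗ[k] F n}
    (hF : ∀ n, Module.Flat k (F n)) (hd : IsAcyclic d) (I : ModuleCat.{u} kᵐᵒᵖ)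
    (hI : Module.Injective kᵐᵒᵖ I) (n : ℤ) :
    Function.Exact (RTensor.map k I (d (n + 1))) (RTensor.map k I (d n)) := by
  let := Module.ofOpposite k I
  have := isCentralScalar_ofOpposite k I
  obtain ⟨m, hm⟩ := exists_flatDimLE_of_flatDim_lt_top (hI.of_opposite.flatDim_le_sfli.trans_lt hk)
  exact (RTensor.exact_map_iff _ _).2 (hd.lTensor_of_flatDimLE hF m hm n)

end FiniteFlatDimension

section RestrictScalars

variable {k : Type u} [CommRing k] {A : Type u} [Ring A] [Algebra k A]
  {M : Type u} [AddCommGroup M] [Module A M] [Module k M] [IsScalarTower k A M]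

theorem ModFlat.flat_restrictScalars [Module.Flat k A] (h : ModFlat A M) : Module.Flat k M := by
  rw [Module.Flat.iff_rTensor_preserves_injective_linearMap']
  intro N N' _ _ _ _ f hf
  have hcomm : ⇑(f.rTensor M) ∘ RTensor.baseChangeEquiv A M N =
      RTensor.baseChangeEquiv A M N' ∘
        RTensor.mapLeft A (TensorProduct.AlgebraTensorModule.lTensor Aᵐᵒᵖ A f) M :=
    congrArg DFunLike.coe (RTensor.baseChangeEquiv_comp_mapLeft f)
  refine (EquivLike.injective_comp (RTensor.baseChangeEquiv A M N) _).1 ?_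
  rw [hcomm]
  exact (RTensor.baseChangeEquiv A M N').injective.comp (h (.of _ (A ⊗[k] N)) (.of _ (A ⊗[k] N'))
    _ (Module.Flat.lTensor_preserves_injective_linearMap f hf))

theorem Module.Projective.restrictScalars [Module.Projective k A] [Module.Projective A M] :
    Module.Projective k M := by
  classical
  obtain ⟨s, hs⟩ := ‹Module.Projective A M›
  have : Module.Projective k (M →₀ A) := .of_equiv' (finsuppLequivDFinsupp k).symm
  exact .of_split (s.restrictScalars k) ((Finsupp.linearCombination A id).restrictScalars k)
    (LinearMap.ext hs)

theorem IsGorensteinFlat.restrictScalars (hk : sfli k < ⊤) [Module.Flat k A]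
    (h : IsGorensteinFlat A M) : IsGorensteinFlat k M := by
  obtain ⟨C, n, ⟨e⟩⟩ := h
  let (m : ℤ) : Module k (C.F m) := Module.compHom _ (algebraMap k A)
  have (m : ℤ) : IsScalarTower k A (C.F m) := .of_algebraMap_smul fun _ _ => rfl
  have hflat (m : ℤ) : Module.Flat k (C.F m) := (C.flat m).flat_restrictScalars
  let d (m : ℤ) : C.F (m + 1) →ₗ[k] C.F m := (C.d m).restrictScalars k
  have hd : IsAcyclic (F := fun m => C.F m) d := C.acyclic
  exact ⟨⟨fun m => .of k (C.F m), d, fun m => modFlat_iff_flat.2 (hflat m), hd,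
    hd.exact_rTensorMap_of_sfli_lt_top hk hflat⟩, n, ⟨e.restrictScalars k⟩⟩

theorem IsPGF.restrictScalars (hk : sfli k < ⊤) [Module.Projective k A]
    (h : IsPGF A M) : IsPGF k M := by
  obtain ⟨C, n, ⟨e⟩⟩ := h
  let (m : ℤ) : Module k (C.F m) := Module.compHom _ (algebraMap k A)
  have (m : ℤ) : IsScalarTower k A (C.F m) := .of_algebraMap_smul fun _ _ => rfl
  have hproj (m : ℤ) : Module.Projective k (C.F m) :=
    have := C.projective m
    .restrictScalars (A := A)
  let d (m : ℤ) : C.F (m + 1) →ₗ[k] C.F m := (C.d m).restrictScalars k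
  have hd : IsAcyclic (F := fun m => C.F m) d := C.acyclic
  exact ⟨⟨fun m => .of k (C.F m), d, hproj, hd,
    hd.exact_rTensorMap_of_sfli_lt_top hk fun m => inferInstance⟩, n, ⟨e.restrictScalars k⟩⟩

end RestrictScalars


/-- if `sfli k < ∞` then every Gorenstein flat `kG`-module is Gorenstein flat
as a `k`-module, and every PGF `kG`-module is PGF as a `k`-module. -/
theorem stmt7 (k : Type u) [CommRing k] (G : Type u) [Group G] (hk : sfli k < ⊤)
    (M : Type u) [AddCommGroup M] [Module (MonoidAlgebra k G) M]
    [Module k M] [IsScalarTower k (MonoidAlgebra k G) M] :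
    (IsGorensteinFlat (MonoidAlgebra k G) M → IsGorensteinFlat k M) ∧
    (IsPGF (MonoidAlgebra k G) M → IsPGF k M) :=
  ⟨.restrictScalars hk, .restrictScalars hk⟩
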